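/- Let f be a sense-preserving harmonic mapping on the unit disk D with α ≥ 0, and suppose the two-sided bound exp(-2αρ(z₀,z)) ≤ ((1-|z|²)J_f(z)^{1/2})/((1-|z₀|²)J_f(z₀)^{1/2}) ≤ exp(2αρ(z₀,z)) holds for all z₀, z ∈ D. Then |A_f(z)| ≤ α for every z ∈ D. -/

import Mathlib

open Complex Metric Set

noncomputable section

/-- The open unit disk in ℂ. -/
def 𝔻 : Set ℂ := Metric.ball (0 : ℂ) 1

/-- Dilatation ω = g'/h' of a harmonic mapping f = h + conj g. -/
def dil (h g : ℂ → ℂ) (z : ℂ) : ℂ := deriv g z / deriv h z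

/-- Harmonic pre-Schwarzian P_f = h''/h' - conj(ω)·ω'/(1-|ω|²). -/
def Pf (h g : ℂ → ℂ) (z : ℂ) : ℂ :=
  deriv (deriv h) z / deriv h z -
    (starRingEnd ℂ) (dil h g z) * deriv (dil h g) z /
      (((1 - ‖(dil h g z)‖ ^ 2 : ℝ) : ℂ))

/-- The operator A_f(z) = ((1-|z|²)/2)·P_f(z) - conj z. -/
def Af (h g : ℂ → ℂ) (z : ℂ) : ℂ :=
  (((1 - ‖z‖ ^ 2 : ℝ) : ℂ)) / 2 * Pf h g z - (starRingEnd ℂ) z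

/-- The operator A_φ for an analytic φ. -/
def Aan (φ : ℂ → ℂ) (z : ℂ) : ℂ :=
  (((1 - ‖z‖ ^ 2 : ℝ) : ℂ)) / 2 * (deriv (deriv φ) z / deriv φ z) -
    (starRingEnd ℂ) z

/-- Jacobian J_f = |h'|² - |g'|². -/
def Jf (h g : ℂ → ℂ) (z : ℂ) : ℝ :=
  ‖(deriv h z)‖ ^ 2 - ‖(deriv g z)‖ ^ 2

/-- f = h + conj g is a sense-preserving harmonic mapping on 𝔻. -/
def SensePreserving (h g : ℂ → ℂ) : Prop :=
  (∀ z ∈ 𝔻, AnalyticAt ℂ h z) ∧ (∀ z ∈ 𝔻, AnalyticAt ℂ g z) ∧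
  (∀ z ∈ 𝔻, deriv h z ≠ 0) ∧ (∀ z ∈ 𝔻, ‖(dil h g z)‖ < 1)

/-- Hyperbolic (Poincaré) distance on 𝔻, with density 1/(1-|z|²). -/
def hypDist (z w : ℂ) : ℝ :=
  (1 / 2) * Real.log
    ((1 + ‖((z - w) / (1 - (starRingEnd ℂ) w * z))‖) /
     (1 - ‖((z - w) / (1 - (starRingEnd ℂ) w * z))‖))

/-- Wirtinger derivative ∂_z of a real-valued function. -/
def wirtinger (u : ℂ → ℝ) (z : ℂ) : ℂ :=
  ((fderiv ℝ u z 1 : ℝ) : ℂ) / 2 - Complex.I * ((fderiv ℝ u z Complex.I : ℝ) : ℂ) / 2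

/-!
The hypothesis says that `u = log ((1 - |z|²) J_f^{1/2})` is `2α`-Lipschitz for the hyperbolic
distance. Since `ρ(z₀, z) / |z - z₀| → 1 / (1 - |z₀|²)`, the gradient of `u` at `z₀` has length at
most `2α / (1 - |z₀|²)`. On the other hand `∂_z u = A_f / (1 - |z|²)`, because the harmonic
pre-Schwarzian is `P_f = (conj h' h'' - conj g' g'') / J_f`, and `|∇u| = 2 |∂_z u|`.
-/

open Filter Topology ComplexConjugate

/-- The differential `v ↦ 2 Re (c v)` of a real function whose Wirtinger derivative `∂_z` is `c`;
its operator norm is the length `2 |c|` of the gradient. -/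
def realDifferential : ℂ →L[ℝ] ℂ →L[ℝ] ℝ :=
  (2 : ℝ) • (ContinuousLinearMap.compL ℝ ℂ ℂ ℝ Complex.reCLM).comp (ContinuousLinearMap.mul ℝ ℂ)

@[simp]
lemma realDifferential_apply (c v : ℂ) : realDifferential c v = 2 * (c * v).re := by
  simp [realDifferential]

lemma two_mul_norm_le_norm_realDifferential (c : ℂ) : 2 * ‖c‖ ≤ ‖realDifferential c‖ := by
  rcases eq_or_ne c 0 with rfl | hc
  · simp
  have h := (realDifferential c).le_opNorm (conj c)
  rw [realDifferential_apply, Complex.mul_conj', Complex.norm_conj] at h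
  norm_cast at h
  rw [Real.norm_of_nonneg (by positivity)] at h
  have := norm_pos_iff.2 hc
  nlinarith

lemma HasDerivAt.hasFDerivAt_norm_sq {φ : ℂ → ℂ} {c z : ℂ} (hφ : HasDerivAt φ c z) :
    HasFDerivAt (fun w => ‖φ w‖ ^ 2) (realDifferential (conj (φ z) * c)) z := by
  refine (hφ.hasFDerivAt.restrictScalars ℝ).norm_sq.congr_fderiv ?_
  ext v
  simp only [smul_apply, ContinuousLinearMap.comp_apply, ContinuousLinearMap.coe_restrictScalars',
    ContinuousLinearMap.toSpanSingleton_apply, coe_innerSL_apply, Complex.inner,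
    realDifferential_apply, smul_eq_mul]
  ring_nf

lemma one_sub_norm_sq_pos {z : ℂ} (hz : z ∈ 𝔻) : 0 < 1 - ‖z‖ ^ 2 := by
  have : ‖z‖ < 1 := by simpa [𝔻] using hz
  nlinarith [norm_nonneg z]

lemma Jf_eq_mul_one_sub_norm_dil_sq {h g : ℂ → ℂ} {z : ℂ} (hh : deriv h z ≠ 0) :
    Jf h g z = ‖deriv h z‖ ^ 2 * (1 - ‖dil h g z‖ ^ 2) := by
  have : ‖deriv h z‖ ≠ 0 := norm_ne_zero_iff.2 hh
  rw [Jf, dil, norm_div]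
  field_simp

lemma Jf_pos {h g : ℂ → ℂ} {z : ℂ} (hh : deriv h z ≠ 0) (hω : ‖dil h g z‖ < 1) :
    0 < Jf h g z := by
  rw [Jf_eq_mul_one_sub_norm_dil_sq hh]
  have : ‖dil h g z‖ ^ 2 < 1 := by nlinarith [norm_nonneg (dil h g z)]
  have : 0 < ‖deriv h z‖ := norm_pos_iff.2 hh
  positivity

lemma Pf_eq {h g : ℂ → ℂ} {z : ℂ} (hh : DifferentiableAt ℂ (deriv h) z)
    (hg : DifferentiableAt ℂ (deriv g) z) (hh₀ : deriv h z ≠ 0) (hω : ‖dil h g z‖ ≠ 1) :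
    Pf h g z = (conj (deriv h z) * deriv (deriv h) z - conj (deriv g z) * deriv (deriv g) z) /
      (Jf h g z : ℂ) := by
  have hderiv : deriv (dil h g) z =
      (deriv (deriv g) z * deriv h z - deriv g z * deriv (deriv h) z) / deriv h z ^ 2 :=
    deriv_div hg hh hh₀
  have hω₁ : 1 - ‖dil h g z‖ ^ 2 ≠ 0 := by
    rwa [sub_ne_zero, ne_comm, Ne, pow_eq_one_iff_of_nonneg (norm_nonneg _) two_ne_zero]
  rw [Pf, hderiv, Jf_eq_mul_one_sub_norm_dil_sq hh₀, dil] at *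
  generalize deriv h z = a, deriv g z = b, deriv (deriv h) z = p, deriv (deriv g) z = q at *
  have ha : conj a ≠ 0 := by simpa using hh₀
  have hω₁' : (1 - ‖b / a‖ ^ 2 : ℂ) ≠ 0 := by exact_mod_cast hω₁
  push_cast
  simp only [← Complex.mul_conj', map_div₀] at hω₁' ⊢
  generalize conj a = A, conj b = B at *
  have hω_eq : 1 - b / a * (B / A) = (a * A - B * b) / (a * A) := by field_simp
  have hJ : a * A - B * b ≠ 0 := (div_ne_zero_iff.1 (hω_eq ▸ hω₁')).1
  rw [hω_eq]
  field_simp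
  ring

def scaledJacobian (h g : ℂ → ℂ) (z : ℂ) : ℝ := (1 - ‖z‖ ^ 2) * Real.sqrt (Jf h g z)

lemma scaledJacobian_pos {h g : ℂ → ℂ} {z : ℂ} (hf : SensePreserving h g) (hz : z ∈ 𝔻) :
    0 < scaledJacobian h g z :=
  mul_pos (one_sub_norm_sq_pos hz) (Real.sqrt_pos.2 (Jf_pos (hf.2.2.1 z hz) (hf.2.2.2 z hz)))

lemma hasFDerivAt_log_scaledJacobian {h g : ℂ → ℂ} {z : ℂ} (hf : SensePreserving h g)
    (hz : z ∈ 𝔻) :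
    HasFDerivAt (fun w => Real.log (scaledJacobian h g w))
      (realDifferential (Af h g z / (1 - ‖z‖ ^ 2 : ℝ))) z := by
  obtain ⟨hh, hg, hh₀, hω⟩ := hf
  have hq := one_sub_norm_sq_pos hz
  have hJ := Jf_pos (hh₀ z hz) (hω z hz)
  have hh' := (hh z hz).deriv.differentiableAt
  have hg' := (hg z hz).deriv.differentiableAt
  have hdisk : HasFDerivAt (fun w : ℂ => 1 - ‖w‖ ^ 2) (-realDifferential (conj z)) z := by
    simpa using (hasDerivAt_id z).hasFDerivAt_norm_sq.const_sub 1
  have hJac : HasFDerivAt (Jf h g) (realDifferential (conj (deriv h z) * deriv (deriv h) z) -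
      realDifferential (conj (deriv g z) * deriv (deriv g) z)) z :=
    hh'.hasDerivAt.hasFDerivAt_norm_sq.sub hg'.hasDerivAt.hasFDerivAt_norm_sq
  have hlog := (hdisk.log hq.ne').add ((hJac.log hJ.ne').const_mul (1 / 2))
  refine (hlog.congr_of_eventuallyEq ?_).congr_fderiv ?_
  · filter_upwards [isOpen_ball.mem_nhds hz] with w hw
    have hJw := Jf_pos (hh₀ w hw) (hω w hw)
    rw [scaledJacobian, Real.log_mul (one_sub_norm_sq_pos hw).ne' (Real.sqrt_pos.2 hJw).ne',
      Real.log_sqrt hJw.le, Pi.add_apply]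
    ring
  · rw [← map_neg, ← map_sub, ← map_smul, ← map_smul, ← map_smul, ← map_add]
    congr 1
    rw [Af, Pf_eq hh' hg' (hh₀ z hz) (hω z hz).ne]
    have hq' : (1 - ‖z‖ ^ 2 : ℂ) ≠ 0 := by exact_mod_cast hq.ne'
    have hJ' : (Jf h g z : ℂ) ≠ 0 := by exact_mod_cast hJ.ne'
    simp only [Complex.real_smul]
    push_cast
    field_simp
    ring

lemma abs_log_le_of_exp_neg_le_of_le_exp {x a : ℝ} (hlo : Real.exp (-a) ≤ x)
    (hhi : x ≤ Real.exp a) : |Real.log x| ≤ a := by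
  have hx := (Real.exp_pos _).trans_le hlo
  exact abs_le.2 ⟨(Real.le_log_iff_exp_le hx).2 hlo, (Real.log_le_iff_le_exp hx).2 hhi⟩

lemma half_log_div_le {d : ℝ} (h₀ : -1 < d) (h₁ : d < 1) :
    1 / 2 * Real.log ((1 + d) / (1 - d)) ≤ d / (1 - d) := by
  have hpos : 0 < 1 - d := by linarith
  have := Real.log_le_sub_one_of_pos (div_pos (by linarith : 0 < 1 + d) hpos)
  rw [div_sub_one hpos.ne', show 1 + d - (1 - d) = 2 * d by ring, mul_div_assoc] at this
  linarith

lemma hypDist_le {z₀ z : ℂ} (hlt : ‖z - z₀‖ < ‖1 - conj z * z₀‖) :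
    hypDist z₀ z ≤ (‖1 - conj z * z₀‖ - ‖z - z₀‖)⁻¹ * ‖z - z₀‖ := by
  have hN : 0 < ‖1 - conj z * z₀‖ := (norm_nonneg _).trans_lt hlt
  have hd : ‖(z₀ - z) / (1 - conj z * z₀)‖ = ‖z - z₀‖ / ‖1 - conj z * z₀‖ := by
    rw [norm_div, norm_sub_rev]
  have hd₁ : ‖z - z₀‖ / ‖1 - conj z * z₀‖ < 1 := (div_lt_one hN).2 hlt
  calc hypDist z₀ z ≤ ‖z - z₀‖ / ‖1 - conj z * z₀‖ / (1 - ‖z - z₀‖ / ‖1 - conj z * z₀‖) := by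
        rw [hypDist, hd]
        exact half_log_div_le (by linarith [div_nonneg (norm_nonneg (z - z₀)) hN.le]) hd₁
    _ = (‖1 - conj z * z₀‖ - ‖z - z₀‖)⁻¹ * ‖z - z₀‖ := by
        rw [one_sub_div hN.ne', div_div_div_cancel_right₀ hN.ne', div_eq_inv_mul]

lemma exists_tendsto_hypDist_le {z₀ : ℂ} (hz₀ : z₀ ∈ 𝔻) :
    ∃ F : ℂ → ℝ, Tendsto F (𝓝 z₀) (𝓝 (1 - ‖z₀‖ ^ 2)⁻¹) ∧
      ∀ᶠ z in 𝓝 z₀, hypDist z₀ z ≤ F z * ‖z - z₀‖ := by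
  have hgap : Tendsto (fun z => ‖1 - conj z * z₀‖ - ‖z - z₀‖) (𝓝 z₀) (𝓝 (1 - ‖z₀‖ ^ 2)) := by
    have hcont : Continuous (fun z => ‖1 - conj z * z₀‖ - ‖z - z₀‖) := by fun_prop
    convert hcont.tendsto z₀ using 2
    rw [sub_self, norm_zero, sub_zero, Complex.conj_mul', ← Complex.ofReal_pow,
      ← Complex.ofReal_one, ← Complex.ofReal_sub, Complex.norm_real,
      Real.norm_of_nonneg (one_sub_norm_sq_pos hz₀).le]
  refine ⟨fun z => (‖1 - conj z * z₀‖ - ‖z - z₀‖)⁻¹, hgap.inv₀ (one_sub_norm_sq_pos hz₀).ne', ?_⟩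
  filter_upwards [hgap.eventually (lt_mem_nhds (one_sub_norm_sq_pos hz₀))] with z hz
  exact hypDist_le (sub_pos.1 hz)

lemma HasFDerivAt.norm_le_of_tendsto {𝕜 E F : Type*} [NontriviallyNormedField 𝕜]
    [NormedAddCommGroup E] [NormedSpace 𝕜 E] [NormedAddCommGroup F] [NormedSpace 𝕜 F]
    {u : E → F} {L : E →L[𝕜] F} {x : E} {G : E → ℝ} {K : ℝ} (hu : HasFDerivAt u L x)
    (hK : 0 ≤ K) (hG : Tendsto G (𝓝 x) (𝓝 K))
    (hle : ∀ᶠ y in 𝓝 x, ‖u y - u x‖ ≤ G y * ‖y - x‖) : ‖L‖ ≤ K := by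
  refine le_of_forall_gt_imp_ge_of_dense fun C hC => hu.le_of_lip' (hK.trans hC.le) ?_
  filter_upwards [hle, hG.eventually (gt_mem_nhds hC)] with y hy hGy
  exact hy.trans (mul_le_mul_of_nonneg_right hGy.le (norm_nonneg _))

/-- if exp(-2αρ(z₀,z)) ≤ ((1-|z|²)J_f(z)^{1/2})/((1-|z₀|²)J_f(z₀)^{1/2})
≤ exp(2αρ(z₀,z)) for all z₀, z ∈ 𝔻, then |A_f(z)| ≤ α on 𝔻. -/
theorem stmt_16 (h g : ℂ → ℂ) (hf : SensePreserving h g) (α : ℝ) (hα : 0 ≤ α)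
    (hbound : ∀ z₀ ∈ 𝔻, ∀ z ∈ 𝔻,
      Real.exp (-(2 * α * hypDist z₀ z)) ≤
          ((1 - ‖z‖ ^ 2) * Real.sqrt (Jf h g z)) /
            ((1 - ‖z₀‖ ^ 2) * Real.sqrt (Jf h g z₀)) ∧
      ((1 - ‖z‖ ^ 2) * Real.sqrt (Jf h g z)) /
          ((1 - ‖z₀‖ ^ 2) * Real.sqrt (Jf h g z₀)) ≤
        Real.exp (2 * α * hypDist z₀ z)) :
    ∀ z ∈ 𝔻, ‖(Af h g z)‖ ≤ α := by
  intro z₀ hz₀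
  have hq := one_sub_norm_sq_pos hz₀
  have hosc : ∀ z ∈ 𝔻, ‖Real.log (scaledJacobian h g z) - Real.log (scaledJacobian h g z₀)‖ ≤
      2 * α * hypDist z₀ z := by
    intro z hz
    rw [Real.norm_eq_abs, ← Real.log_div (scaledJacobian_pos hf hz).ne'
      (scaledJacobian_pos hf hz₀).ne']
    exact abs_log_le_of_exp_neg_le_of_le_exp (hbound z₀ hz₀ z hz).1 (hbound z₀ hz₀ z hz).2
  obtain ⟨F, hF, hρ⟩ := exists_tendsto_hypDist_le hz₀
  have hgrad : ‖realDifferential (Af h g z₀ / (1 - ‖z₀‖ ^ 2 : ℝ))‖ ≤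
      2 * α * (1 - ‖z₀‖ ^ 2)⁻¹ := by
    refine (hasFDerivAt_log_scaledJacobian hf hz₀).norm_le_of_tendsto (by positivity)
      (hF.const_mul (2 * α)) ?_
    filter_upwards [hρ, isOpen_ball.mem_nhds hz₀] with z hρz hz
    calc _ ≤ 2 * α * hypDist z₀ z := hosc z hz
      _ ≤ 2 * α * (F z * ‖z - z₀‖) := by gcongr
      _ = _ := by ring
  have := (two_mul_norm_le_norm_realDifferential _).trans hgrad
  rw [norm_div, Complex.norm_real, Real.norm_of_nonneg hq.le] at this
  rw [← div_le_div_iff_of_pos_right hq, div_eq_mul_inv α]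
  linarith
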